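/- Let G be an r-graph and X a non-trivial odd vertex set with |∂(X)| = r. Let G₁ and G₂ be obtained from G by contracting V(G)∖X and X to single vertices, respectively. Then G₁ and G₂ are r-graphs with fewer vertices than G. -/

import Mathlib

/-- A multigraph on vertex type `V` with edge type `E`: each edge has a pair of endpoints. -/
structure Multigraph (V E : Type) where
  ends : E → Sym2 V

namespace Multigraph

variable {V E : Type}

/-- No loops: no edge has equal endpoints. -/
def Loopless (G : Multigraph V E) : Prop := ∀ e, ¬ (G.ends e).IsDiag

/-- The degree of a vertex: the number of edges incident with it. -/
noncomputable def degree (G : Multigraph V E) (v : V) : ℕ := Nat.card {e | v ∈ G.ends e}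

/-- The edge cut `∂(X)`: edges with exactly one end in `X`. -/
def cut (G : Multigraph V E) (X : Set V) : Set E :=
  {e | ∃ u ∈ X, ∃ w ∉ X, G.ends e = s(u, w)}

/-- The underlying simple graph. -/
def toSimple (G : Multigraph V E) : SimpleGraph V where
  Adj u w := u ≠ w ∧ ∃ e, G.ends e = s(u, w)
  symm := by
    constructor
    rintro u w ⟨h, e, he⟩
    exact ⟨h.symm, e, by rw [he, Sym2.eq_swap]⟩
  loopless := by constructor; rintro u ⟨h, _⟩; exact h rfl

/-- Connectivity of a multigraph. -/
def Connected (G : Multigraph V E) : Prop := G.toSimple.Connected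

/-- `M` is a perfect matching on the vertex set `A`: every edge of `M` has both ends
in `A` and every vertex of `A` is covered by exactly one edge of `M`. -/
def IsPerfectMatchingOn (G : Multigraph V E) (A : Set V) (M : Set E) : Prop :=
  (∀ e ∈ M, ∀ v ∈ G.ends e, v ∈ A) ∧ ∀ v ∈ A, ∃! e, e ∈ M ∧ v ∈ G.ends e

/-- A perfect matching of `G`. -/
def IsPerfectMatching (G : Multigraph V E) (M : Set E) : Prop :=
  G.IsPerfectMatchingOn Set.univ M

/-- `θ(G−S)`: the number of odd components of `G − S`. -/
noncomputable def theta (G : Multigraph V E) (S : Set V) : ℕ :=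
  Nat.card {c : (G.toSimple.induce Sᶜ).ConnectedComponent // Odd (Nat.card c.supp)}

/-- A barrier: a vertex set `S` with `θ(G−S) = |S|`. -/
def IsBarrier (G : Multigraph V E) (S : Set V) : Prop := G.theta S = Nat.card S

/-- Bi-critical: deleting any two distinct vertices leaves a graph with a perfect matching. -/
def Bicritical (G : Multigraph V E) : Prop :=
  ∀ u v : V, u ≠ v → ∃ M, G.IsPerfectMatchingOn {u, v}ᶜ M

/-- Bipartite multigraph. -/
def Bipartite (G : Multigraph V E) : Prop := G.toSimple.Colorable 2

/-- `k`-vertex-connected: deleting fewer than `k` vertices leaves a connected graph. -/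
def VertexConnected (G : Multigraph V E) (k : ℕ) : Prop :=
  ∀ S : Set V, Nat.card S < k → (G.toSimple.induce Sᶜ).Connected

/-- A brick: non-bipartite, bi-critical and 3-vertex-connected. -/
def IsBrick (G : Multigraph V E) : Prop :=
  ¬ G.Bipartite ∧ G.Bicritical ∧ G.VertexConnected 3

/-- A proper edge coloring with `k` colors exists. -/
def EdgeColorable (G : Multigraph V E) (k : ℕ) : Prop :=
  ∃ c : E → Fin k, ∀ e f, e ≠ f → (∃ v, v ∈ G.ends e ∧ v ∈ G.ends f) → c e ≠ c f

/-- A non-trivial odd vertex set: odd cardinality, different from `1` and `|V|−1`. -/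
def NontrivialOdd (_G : Multigraph V E) (X : Set V) : Prop :=
  Odd (Nat.card X) ∧ Nat.card X ≠ 1 ∧ Nat.card X ≠ Nat.card V - 1

/-- An `r`-graph: a connected loopless `r`-regular multigraph in which every odd
vertex set has at least `r` edges leaving it. -/
def IsRGraph (G : Multigraph V E) (r : ℕ) : Prop :=
  G.Loopless ∧ G.Connected ∧ (∀ v, G.degree v = r) ∧
    ∀ X : Set V, Odd (Nat.card X) → r ≤ Nat.card (G.cut X)

open Classical in
/-- The projection identifying the complement of `X` to a single new vertex. -/
noncomputable def proj (X : Set V) (v : V) : ↥X ⊕ Unit :=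
  if h : v ∈ X then .inl ⟨v, h⟩ else .inr ()

/-- Contract the complement of `X` to a single vertex, deleting the resulting loops
(i.e. the edges with both ends outside `X`) but keeping multiplicities. -/
noncomputable def contract (G : Multigraph V E) (X : Set V) :
    Multigraph (↥X ⊕ Unit) {e // ¬ ((G.ends e).map (proj X)).IsDiag} where
  ends e := (G.ends e.1).map (proj X)

/-- The spanning sub-multigraph with edge set `A`. -/
def restrict (G : Multigraph V E) (A : Set E) : Multigraph V ↥A where
  ends e := G.ends e.1

open Classical in
/-- Expansion: replace every vertex `v` by a cycle `C_v` of length `2k+1` in which every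
edge has multiplicity `k`; the `2k+1` old edges at `v` are attached to the `2k+1` distinct
vertices of `C_v` according to the bijection `φ v`. -/
noncomputable def expand (H : Multigraph V E) (k : ℕ)
    (φ : (v : V) → {e // v ∈ H.ends e} ≃ ZMod (2 * k + 1)) :
    Multigraph (V × ZMod (2 * k + 1)) (E ⊕ V × ZMod (2 * k + 1) × Fin k) where
  ends := fun e => match e with
    | .inl e => (H.ends e).map (fun v => (v, if h : v ∈ H.ends e then φ v ⟨e, h⟩ else 0))
    | .inr (v, i, _) => s((v, i), (v, i + 1))

end Multigraph

/-!
The edges of the contraction are the edges of `G` not lying inside `Xᶜ`, and the cut of a vertex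
set `Y` of the contraction is exactly the cut of its preimage in `G`. Hence every old vertex keeps
its degree, the new vertex has degree `|∂X| = r`, and an odd `Y` either avoids the new vertex, so
that its preimage is odd of the same size, or its complement does, because the contraction has the
even number `|X| + 1` of vertices. Since `∂V = ∅` and `r > 0`, `|V|` is even, so `Xᶜ` is again a
non-trivial odd set and the same argument applies to the contraction of `X`.
-/

namespace Multigraph

variable {V E : Type}

section Proj

variable {X : Set V}

lemma proj_of_mem {v : V} (h : v ∈ X) : proj X v = .inl ⟨v, h⟩ := dif_pos h

lemma proj_of_not_mem {v : V} (h : v ∉ X) : proj X v = .inr () := dif_neg h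

lemma proj_surjective (hX : Xᶜ.Nonempty) : Function.Surjective (proj X) := by
  rintro (⟨v, hv⟩ | ⟨⟩)
  · exact ⟨v, proj_of_mem hv⟩
  · obtain ⟨w, hw⟩ := hX
    exact ⟨w, proj_of_not_mem hw⟩

lemma preimage_proj_inl (v : X) : proj X ⁻¹' {.inl v} = {v.1} := by
  ext a
  by_cases ha : a ∈ X
  · simp [proj_of_mem ha, Subtype.ext_iff]
  · simp only [Set.mem_preimage, proj_of_not_mem ha, Set.mem_singleton_iff, reduceCtorEq,
      false_iff]
    rintro rfl
    exact ha v.2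

lemma preimage_proj_inr : proj X ⁻¹' {.inr ()} = Xᶜ := by
  ext a
  by_cases ha : a ∈ X <;> simp [proj_of_mem, proj_of_not_mem, ha]

lemma mem_of_proj_mem {Y : Set (X ⊕ Unit)} (hY : .inr () ∉ Y) {v : V} (hv : proj X v ∈ Y) :
    v ∈ X := by
  by_contra h
  exact hY (proj_of_not_mem h ▸ hv)

lemma card_preimage_proj {Y : Set (X ⊕ Unit)} (hY : .inr () ∉ Y) :
    Nat.card (proj X ⁻¹' Y) = Nat.card Y := by
  refine Nat.card_preimage_of_injOn (fun a ha b hb hab => ?_) ?_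
  · rw [proj_of_mem (mem_of_proj_mem hY ha), proj_of_mem (mem_of_proj_mem hY hb)] at hab
    simpa using hab
  · rintro (v | ⟨⟩) hv
    · exact ⟨v, proj_of_mem v.2⟩
    · exact absurd hv hY

end Proj

section Cut

variable (G : Multigraph V E)

lemma mem_cut_iff {X : Set V} {e : E} :
    e ∈ G.cut X ↔ (G.ends e).map (· ∈ X) = s(True, False) := by
  change (∃ u ∈ X, ∃ w ∉ X, G.ends e = s(u, w)) ↔ _
  induction G.ends e using Sym2.ind with
  | _ a b =>
    simp only [Sym2.map_mk, Sym2.eq_iff, eq_iff_iff, iff_true, iff_false]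
    constructor
    · rintro ⟨u, hu, w, hw, (⟨rfl, rfl⟩ | ⟨rfl, rfl⟩)⟩
      · exact .inl ⟨hu, hw⟩
      · exact .inr ⟨hw, hu⟩
    · rintro (⟨ha, hb⟩ | ⟨ha, hb⟩)
      · exact ⟨a, ha, b, hb, .inl ⟨rfl, rfl⟩⟩
      · exact ⟨b, hb, a, ha, .inr ⟨rfl, rfl⟩⟩

lemma cut_compl (X : Set V) : G.cut Xᶜ = G.cut X := by
  ext e
  constructor <;> rintro ⟨u, hu, w, hw, h⟩
  · exact ⟨w, not_not.1 hw, u, hu, h.trans Sym2.eq_swap⟩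
  · exact ⟨w, hw, u, not_not.2 hu, h.trans Sym2.eq_swap⟩

@[simp]
lemma cut_univ : G.cut Set.univ = ∅ :=
  Set.eq_empty_of_forall_notMem fun _ ⟨_, _, _, hw, _⟩ => hw trivial

variable {G}

lemma Loopless.cut_singleton (hG : G.Loopless) (v : V) : G.cut {v} = {e | v ∈ G.ends e} := by
  ext e
  simp only [cut, Set.mem_ofPred_eq, Set.mem_singleton_iff, exists_eq_left]
  refine ⟨fun ⟨w, _, h⟩ => h ▸ Sym2.mem_mk_left v w, fun h => ?_⟩
  obtain ⟨w, hw⟩ := Sym2.mem_iff_exists.1 h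
  refine ⟨w, fun hwv => hG e ?_, hw⟩
  rw [hw, hwv, Sym2.mk_isDiag_iff]

lemma Loopless.degree_eq_card_cut (hG : G.Loopless) (v : V) :
    G.degree v = Nat.card (G.cut {v}) := by
  rw [degree, hG.cut_singleton]

end Cut

section Contract

variable {G : Multigraph V E} {X : Set V}

lemma mem_cut_contract {Y : Set (X ⊕ Unit)} {e : {e // ¬ ((G.ends e).map (proj X)).IsDiag}} :
    e ∈ (G.contract X).cut Y ↔ e.1 ∈ G.cut (proj X ⁻¹' Y) := by
  simp only [mem_cut_iff, contract, Sym2.map_map]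
  rfl

lemma card_cut_contract (Y : Set (X ⊕ Unit)) :
    Nat.card ((G.contract X).cut Y) = Nat.card (G.cut (proj X ⁻¹' Y)) := by
  have hcut : (G.contract X).cut Y = Subtype.val ⁻¹' G.cut (proj X ⁻¹' Y) :=
    Set.ext fun _ => mem_cut_contract
  refine hcut ▸ Nat.card_preimage_of_injective Subtype.val_injective fun e he => ⟨⟨e, ?_⟩, rfl⟩
  intro hdiag
  have hY : (Sym2.map (· ∈ proj X ⁻¹' Y) (G.ends e)).IsDiag := by
    simpa [Sym2.map_map] using hdiag.map (f := (· ∈ Y))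
  rw [(mem_cut_iff G).1 he, Sym2.mk_isDiag_iff] at hY
  simp at hY

lemma loopless_contract : (G.contract X).Loopless := fun e => e.2

lemma reachable_contract {a b : V} (h : G.toSimple.Reachable a b) :
    (G.contract X).toSimple.Reachable (proj X a) (proj X b) := by
  rw [SimpleGraph.reachable_iff_reflTransGen] at h ⊢
  refine Relation.ReflTransGen.lift' (proj X) (fun u c (hadj : G.toSimple.Adj u c) => ?_) a b h
  obtain ⟨-, e, he⟩ := hadj
  show Relation.ReflTransGen _ (proj X u) (proj X c)
  by_cases hp : proj X u = proj X c
  · exact hp ▸ .refl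
  · have hnd : ¬ ((G.ends e).map (proj X)).IsDiag := by
      rwa [he, Sym2.map_mk, Sym2.mk_isDiag_iff]
    exact .single ⟨hp, ⟨e, hnd⟩, by simp [contract, he]⟩

lemma Connected.contract (hG : G.Connected) (hX : Xᶜ.Nonempty) : (G.contract X).Connected := by
  have : Nonempty (X ⊕ Unit) := ⟨.inr ()⟩
  refine ⟨fun y z => ?_⟩
  obtain ⟨v, rfl⟩ := proj_surjective hX y
  obtain ⟨w, rfl⟩ := proj_surjective hX z
  exact reachable_contract (hG.preconnected v w)

lemma Loopless.degree_contract_inl (hG : G.Loopless) (v : X) :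
    (G.contract X).degree (.inl v) = G.degree v := by
  rw [loopless_contract.degree_eq_card_cut, card_cut_contract, preimage_proj_inl,
    hG.degree_eq_card_cut]

lemma degree_contract_inr : (G.contract X).degree (.inr ()) = Nat.card (G.cut X) := by
  rw [loopless_contract.degree_eq_card_cut, card_cut_contract, preimage_proj_inr, cut_compl]

end Contract

lemma card_add_card_compl [Finite V] (X : Set V) :
    Nat.card X + Nat.card ↥Xᶜ = Nat.card V := by
  rw [Nat.card_coe_set_eq, Nat.card_coe_set_eq, Set.ncard_add_ncard_compl]

lemma card_sum_unit_lt [Finite V] {X : Set V} (hX : 1 < Nat.card ↥Xᶜ) :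
    Nat.card (X ⊕ Unit) < Nat.card V := by
  rw [Nat.card_sum, Nat.card_unique (α := Unit), ← card_add_card_compl X]
  omega

namespace IsRGraph

variable {G : Multigraph V E} {r : ℕ}

lemma pos [Finite E] [Nontrivial V] (hG : G.IsRGraph r) : 0 < r := by
  obtain ⟨-, hconn, hdeg, -⟩ := hG
  obtain ⟨v⟩ := (inferInstance : Nonempty V)
  obtain ⟨w, -, e, he⟩ := hconn.preconnected.exists_adj_of_nontrivial v
  have : Nonempty {e | v ∈ G.ends e} := ⟨⟨e, show v ∈ G.ends e from he ▸ Sym2.mem_mk_left v w⟩⟩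
  exact hdeg v ▸ Nat.card_pos

lemma even_card (hG : G.IsRGraph r) (hr : 0 < r) : Even (Nat.card V) := by
  by_contra hodd
  have hcut_univ := hG.2.2.2 Set.univ (Nat.card_univ (α := V) ▸ Nat.not_even_iff_odd.1 hodd)
  rw [cut_univ, Nat.card_of_isEmpty] at hcut_univ
  omega

lemma contract [Finite V] (hG : G.IsRGraph r) {X : Set V} (hX : Odd (Nat.card X))
    (hXc : Xᶜ.Nonempty) (hcut : Nat.card (G.cut X) = r) : (G.contract X).IsRGraph r := by
  obtain ⟨hloop, hconn, hdeg, hodd⟩ := hG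
  refine ⟨loopless_contract, hconn.contract hXc, ?_, fun Y hY => ?_⟩
  · rintro (v | ⟨⟩)
    · rw [hloop.degree_contract_inl, hdeg]
    · rw [degree_contract_inr, hcut]
  have hcut_odd {Z : Set (X ⊕ Unit)} (hZ : .inr () ∉ Z) (hZodd : Odd (Nat.card Z)) :
      r ≤ Nat.card ((G.contract X).cut Z) := by
    rw [card_cut_contract]
    exact hodd _ (card_preimage_proj hZ ▸ hZodd)
  by_cases hinr : .inr () ∈ Y
  · have hsum := card_add_card_compl Y
    rw [Nat.card_sum, Nat.card_unique (α := Unit)] at hsum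
    rw [← cut_compl]
    refine hcut_odd (not_not.2 hinr) ?_
    have := Nat.odd_iff.1 hX
    have := Nat.odd_iff.1 hY
    exact Nat.odd_iff.2 (by omega)
  · exact hcut_odd hinr hY

lemma nontrivialOdd_compl [Finite V] [Finite E] (hG : G.IsRGraph r) {X : Set V}
    (hX : G.NontrivialOdd X) : G.NontrivialOdd Xᶜ := by
  have hsum := card_add_card_compl X
  obtain ⟨⟨k, hk⟩, hne_one, hne_compl⟩ := hX
  have : Nontrivial V := Finite.one_lt_card_iff_nontrivial.1 (by omega)
  obtain ⟨m, hm⟩ := hG.even_card hG.pos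
  exact ⟨⟨m - k - 1, by omega⟩, by omega, by omega⟩

end IsRGraph

lemma NontrivialOdd.one_lt_card {G : Multigraph V E} {X : Set V} (hX : G.NontrivialOdd X) :
    1 < Nat.card X := by
  obtain ⟨⟨k, hk⟩, hne_one, -⟩ := hX
  omega

lemma NontrivialOdd.nonempty {G : Multigraph V E} {X : Set V} (hX : G.NontrivialOdd X) :
    X.Nonempty :=
  Set.nonempty_coe_sort.1 (Nat.card_pos_iff.1 (Nat.zero_lt_of_lt hX.one_lt_card)).1

end Multigraph

/-- Contracting the complement of a non-trivial odd set X with |∂(X)| = r,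
or X itself, yields r-graphs with fewer vertices. -/
theorem contract_rGraph {V E : Type} [Fintype V] [Fintype E]
    (G : Multigraph V E) (r : ℕ) (hG : G.IsRGraph r)
    (X : Set V) (hX : G.NontrivialOdd X) (hcut : Nat.card (G.cut X) = r) :
    (G.contract X).IsRGraph r ∧ (G.contract Xᶜ).IsRGraph r ∧
    Nat.card (↥X ⊕ Unit) < Nat.card V ∧ Nat.card (↥Xᶜ ⊕ Unit) < Nat.card V := by
  have hXc := hG.nontrivialOdd_compl hX
  refine ⟨hG.contract hX.1 hXc.nonempty hcut,
    hG.contract hXc.1 ?_ (by rwa [Multigraph.cut_compl]),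
    Multigraph.card_sum_unit_lt hXc.one_lt_card, Multigraph.card_sum_unit_lt ?_⟩ <;>
    rw [compl_compl]
  exacts [hX.nonempty, hX.one_lt_card]
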